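/- Let T be a closed operator and N a normal operator on H, with A the block operator (x,y) ↦ (0, Tx) on dom(T) ⊕ H and Ñ = diag(N, N*) on dom(N) ⊕ dom(N*). Then TN ⊆ NT if and only if AÑ ⊆ Ñ*A. -/

import Mathlib

open LinearPMap

/-- Composition of partial linear maps: `T.pcomp S` is "first `S`, then `T`", with
domain `{x ∈ dom S : S x ∈ dom T}`. -/
noncomputable def LinearPMap.pcomp {H : Type*} [NormedAddCommGroup H] [InnerProductSpace ℂ H]
    (T S : H →ₗ.[ℂ] H) : H →ₗ.[ℂ] H where
  domain := (Submodule.comap S.toFun T.domain).map S.domain.subtype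
  toFun := T.toFun ∘ₗ (S.toFun.restrict fun _ hx => hx) ∘ₗ
    (Submodule.equivMapOfInjective S.domain.subtype S.domain.injective_subtype
      (Submodule.comap S.toFun T.domain)).symm.toLinearMap

/-- A densely defined closed operator `N` on a complex Hilbert space is normal if
`N* N = N N*` (as partial linear maps). -/
noncomputable def LinearPMap.IsNormalOp {H : Type*} [NormedAddCommGroup H]
    [InnerProductSpace ℂ H] [CompleteSpace H] (N : H →ₗ.[ℂ] H) : Prop :=
  Dense (N.domain : Set H) ∧ N.IsClosed ∧ N.adjoint.pcomp N = N.pcomp N.adjoint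

/-- A bounded everywhere-defined operator viewed as a partial linear map. -/
noncomputable def ContinuousLinearMap.toPMapTop {H : Type*} [NormedAddCommGroup H]
    [InnerProductSpace ℂ H] (A : H →L[ℂ] H) : H →ₗ.[ℂ] H :=
  (A : H →ₗ[ℂ] H).toPMap ⊤

/-- The block diagonal operator `diag(N, M)` on `H ⊕ H` with domain `dom N ⊕ dom M`,
acting by `(x, y) ↦ (N x, M y)`. -/
noncomputable def pdiag {H : Type*} [NormedAddCommGroup H] [InnerProductSpace ℂ H]
    (N M : H →ₗ.[ℂ] H) : WithLp 2 (H × H) →ₗ.[ℂ] WithLp 2 (H × H) where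
  domain := (N.domain.prod M.domain).comap (WithLp.linearEquiv 2 ℂ (H × H)).toLinearMap
  toFun := (WithLp.linearEquiv 2 ℂ (H × H)).symm.toLinearMap ∘ₗ
    ((N.toFun ∘ₗ (LinearMap.restrict (LinearMap.fst ℂ H H ∘ₗ (WithLp.linearEquiv 2 ℂ (H × H)).toLinearMap)
        (p := (N.domain.prod M.domain).comap (WithLp.linearEquiv 2 ℂ (H × H)).toLinearMap)
        (q := N.domain) fun _ hx => hx.1)).prod
      (M.toFun ∘ₗ (LinearMap.restrict (LinearMap.snd ℂ H H ∘ₗ (WithLp.linearEquiv 2 ℂ (H × H)).toLinearMap)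
        (p := (N.domain.prod M.domain).comap (WithLp.linearEquiv 2 ℂ (H × H)).toLinearMap)
        (q := M.domain) fun _ hx => hx.2)))

/-- The block operator `(x, y) ↦ (0, T x)` on `H ⊕ H` (the operator matrix with `T` in the
lower-left corner and zeros elsewhere), with domain `dom T ⊕ H`. -/
noncomputable def pblockLL {H : Type*} [NormedAddCommGroup H] [InnerProductSpace ℂ H]
    (T : H →ₗ.[ℂ] H) : WithLp 2 (H × H) →ₗ.[ℂ] WithLp 2 (H × H) where
  domain := (T.domain.prod ⊤).comap (WithLp.linearEquiv 2 ℂ (H × H)).toLinearMap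
  toFun := (WithLp.linearEquiv 2 ℂ (H × H)).symm.toLinearMap ∘ₗ
    ((0 : _ →ₗ[ℂ] H).prod
      (T.toFun ∘ₗ (LinearMap.restrict (LinearMap.fst ℂ H H ∘ₗ (WithLp.linearEquiv 2 ℂ (H × H)).toLinearMap)
        (p := (T.domain.prod ⊤).comap (WithLp.linearEquiv 2 ℂ (H × H)).toLinearMap)
        (q := T.domain) fun _ hx => hx.1)))

/-- The block operator `(x, y) ↦ (S y, 0)` on `H ⊕ H` (the operator matrix with `S` in the
upper-right corner and zeros elsewhere), with domain `H ⊕ dom S`. -/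
noncomputable def pblockUR {H : Type*} [NormedAddCommGroup H] [InnerProductSpace ℂ H]
    (S : H →ₗ.[ℂ] H) : WithLp 2 (H × H) →ₗ.[ℂ] WithLp 2 (H × H) where
  domain := ((⊤ : Submodule ℂ H).prod S.domain).comap (WithLp.linearEquiv 2 ℂ (H × H)).toLinearMap
  toFun := (WithLp.linearEquiv 2 ℂ (H × H)).symm.toLinearMap ∘ₗ
    ((S.toFun ∘ₗ (LinearMap.restrict (LinearMap.snd ℂ H H ∘ₗ (WithLp.linearEquiv 2 ℂ (H × H)).toLinearMap)
        (p := ((⊤ : Submodule ℂ H).prod S.domain).comap (WithLp.linearEquiv 2 ℂ (H × H)).toLinearMap)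
        (q := S.domain) fun _ hx => hx.2)).prod 0)

variable {H : Type*} [NormedAddCommGroup H] [InnerProductSpace ℂ H] [CompleteSpace H]

/-!
For a closed densely defined `N`, the graph of `N†` is the image of the orthogonal complement
of the graph of `N` under `(a, b) ↦ (b, -a)`, so `N†† = N` because a closed subspace is its own
double orthogonal complement. Hence `Ñ* = diag(N*, N)`, and comparing graphs,
`AÑ ⊆ diag(N*, N) A` says that whenever `x ∈ dom N` and `N x ∈ dom T`, then `x ∈ dom T`,
`T x ∈ dom N` and `N T x = T N x`, which is `TN ⊆ NT`.
-/

open WithLp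

namespace Submodule

variable {𝕜 E F : Type*} [RCLike 𝕜] [NormedAddCommGroup E] [InnerProductSpace 𝕜 E]
  [NormedAddCommGroup F] [InnerProductSpace 𝕜 F]

theorem le_adjoint_adjoint (g : Submodule 𝕜 (E × F)) : g ≤ g.adjoint.adjoint := by
  intro x hx
  rw [mem_adjoint_iff]
  intro p q hpq
  rw [mem_adjoint_iff] at hpq
  rw [← inner_conj_symm, ← inner_conj_symm p, ← _root_.map_sub, ← neg_sub, hpq x.1 x.2 hx,
    neg_zero, _root_.map_zero]

theorem adjoint_adjoint_of_isClosed [CompleteSpace E] [CompleteSpace F]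
    {g : Submodule 𝕜 (E × F)} (hg : IsClosed (g : Set (E × F))) : g.adjoint.adjoint = g := by
  refine le_antisymm (fun x hx => ?_) g.le_adjoint_adjoint
  let G : Submodule 𝕜 (WithLp 2 (E × F)) :=
    g.comap (WithLp.linearEquiv 2 𝕜 (E × F)).toLinearMap
  have hG : IsClosed (G : Set (WithLp 2 (E × F))) :=
    hg.preimage (WithLp.prod_continuous_ofLp _ _ _)
  suffices toLp 2 x ∈ Gᗮᗮ by
    rwa [orthogonal_orthogonal_eq_closure, hG.submodule_topologicalClosure_eq] at this
  rw [mem_orthogonal]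
  rintro ⟨a, b⟩ hab
  have hba : (b, -a) ∈ g.adjoint := by
    rw [mem_adjoint_iff]
    intro c d hcd
    have hcd_perp := (mem_orthogonal _ _).mp hab (toLp 2 (c, d)) hcd
    rw [prod_inner_apply] at hcd_perp
    rw [inner_neg_right, sub_neg_eq_add, add_comm]
    exact hcd_perp
  have hx_ab := (mem_adjoint_iff _ _).mp hx b (-a) hba
  rw [inner_neg_left] at hx_ab
  rw [prod_inner_apply]
  exact neg_eq_zero.mp ((neg_add' _ _).trans hx_ab)

end Submodule

namespace LinearPMap

variable {𝕜 E F : Type*} [RCLike 𝕜] [NormedAddCommGroup E] [InnerProductSpace 𝕜 E]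
  [NormedAddCommGroup F] [InnerProductSpace 𝕜 F] [CompleteSpace E] [CompleteSpace F]
  {T : E →ₗ.[𝕜] F}

theorem dense_adjoint_domain_of_isClosed (hT : Dense (T.domain : Set E)) (hc : T.IsClosed) :
    Dense (T†.domain : Set F) := by
  rw [Submodule.dense_iff_topologicalClosure_eq_top, Submodule.topologicalClosure_eq_top_iff,
    Submodule.eq_bot_iff]
  intro v hv
  have h0v : ((0 : E), v) ∈ T.graph := by
    rw [← Submodule.adjoint_adjoint_of_isClosed hc, ← adjoint_graph_eq_graph_adjoint hT,
      Submodule.mem_adjoint_iff]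
    intro p q hpq
    rw [inner_zero_right, zero_sub, neg_eq_zero]
    exact Submodule.inner_right_of_mem_orthogonal (mem_domain_of_mem_graph hpq) hv
  exact graph_fst_eq_zero_snd T h0v rfl

theorem adjoint_adjoint_of_isClosed (hT : Dense (T.domain : Set E)) (hc : T.IsClosed) :
    T†† = T :=
  eq_of_eq_graph <| by
    rw [adjoint_graph_eq_graph_adjoint (dense_adjoint_domain_of_isClosed hT hc),
      adjoint_graph_eq_graph_adjoint hT, Submodule.adjoint_adjoint_of_isClosed hc]

end LinearPMap

section BlockOperators

variable {E : Type*} [NormedAddCommGroup E] [InnerProductSpace ℂ E]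

theorem LinearPMap.pcomp_apply {T S : E →ₗ.[ℂ] E} (x : S.domain) (hx : S x ∈ T.domain) :
    T.pcomp S ⟨x, x, hx, rfl⟩ = T ⟨S x, hx⟩ := by
  change T.toFun (S.toFun.restrict (fun _ hy => hy)
    ((Submodule.equivMapOfInjective _ S.domain.injective_subtype _).symm
      (Submodule.equivMapOfInjective _ S.domain.injective_subtype _ ⟨x, hx⟩))) = _
  rw [LinearEquiv.symm_apply_apply]
  rfl

theorem LinearPMap.mem_graph_pcomp_iff {T S : E →ₗ.[ℂ] E} {x z : E} :
    (x, z) ∈ (T.pcomp S).graph ↔ ∃ y, (x, y) ∈ S.graph ∧ (y, z) ∈ T.graph := by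
  simp only [mem_graph_iff]
  constructor
  · rintro ⟨⟨_, ⟨v, hv, rfl⟩⟩, rfl, rfl⟩
    exact ⟨S v, ⟨v, rfl, rfl⟩, ⟨S v, hv⟩, rfl, (pcomp_apply v hv).symm⟩
  · rintro ⟨y, ⟨v, rfl, rfl⟩, ⟨⟨_, hv⟩, rfl, rfl⟩⟩
    exact ⟨⟨v, v, hv, rfl⟩, rfl, pcomp_apply v hv⟩

theorem mem_graph_pdiag_iff {N M : E →ₗ.[ℂ] E} {x y x' y' : E} :
    (toLp 2 (x, y), toLp 2 (x', y')) ∈ (pdiag N M).graph ↔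
      (x, x') ∈ N.graph ∧ (y, y') ∈ M.graph := by
  simp only [mem_graph_iff]
  constructor
  · rintro ⟨⟨_, hx, hy⟩, rfl, h⟩
    obtain ⟨rfl, rfl⟩ := Prod.mk.inj (toLp_injective 2 h)
    exact ⟨⟨⟨x, hx⟩, rfl, rfl⟩, ⟨y, hy⟩, rfl, rfl⟩
  · rintro ⟨⟨⟨x, hx⟩, rfl, rfl⟩, ⟨⟨y, hy⟩, rfl, rfl⟩⟩
    exact ⟨⟨toLp 2 (x, y), hx, hy⟩, rfl, rfl⟩

theorem mem_graph_pblockLL_iff {T : E →ₗ.[ℂ] E} {x y x' y' : E} :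
    (toLp 2 (x, y), toLp 2 (x', y')) ∈ (pblockLL T).graph ↔ x' = 0 ∧ (x, y') ∈ T.graph := by
  simp only [mem_graph_iff]
  constructor
  · rintro ⟨⟨_, hx, _⟩, rfl, h⟩
    obtain ⟨rfl, rfl⟩ := Prod.mk.inj (toLp_injective 2 h)
    exact ⟨rfl, ⟨x, hx⟩, rfl, rfl⟩
  · rintro ⟨rfl, ⟨⟨x, hx⟩, rfl, rfl⟩⟩
    exact ⟨⟨toLp 2 (x, y), hx, trivial⟩, rfl, rfl⟩

theorem pblockLL_pcomp_pdiag_le_iff {T N M M' N' : E →ₗ.[ℂ] E} :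
    (pblockLL T).pcomp (pdiag N M) ≤ (pdiag M' N').pcomp (pblockLL T) ↔
      T.pcomp N ≤ N'.pcomp T := by
  rw [← le_graph_iff, ← le_graph_iff]
  constructor
  · rintro h ⟨x, z⟩ hxz
    obtain ⟨y, hxy, hyz⟩ := mem_graph_pcomp_iff.mp hxz
    obtain ⟨⟨v, v'⟩, hv, hvz⟩ := mem_graph_pcomp_iff.mp <|
      @h (toLp 2 (x, 0), toLp 2 (0, z)) <| mem_graph_pcomp_iff.mpr ⟨toLp 2 (y, 0), mem_graph_pdiag_iff.mpr ⟨hxy, M.graph.zero_mem⟩,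
        mem_graph_pblockLL_iff.mpr ⟨rfl, hyz⟩⟩
    exact mem_graph_pcomp_iff.mpr
      ⟨v', (mem_graph_pblockLL_iff.mp hv).2, (mem_graph_pdiag_iff.mp hvz).2⟩
  · rintro h ⟨⟨x, _⟩, ⟨x', y'⟩⟩ hzw
    obtain ⟨⟨v, _⟩, hv, hvw⟩ := mem_graph_pcomp_iff.mp hzw
    obtain ⟨rfl, hvy'⟩ := mem_graph_pblockLL_iff.mp hvw
    obtain ⟨u, hxu, huy'⟩ := mem_graph_pcomp_iff.mp <| h <|
      mem_graph_pcomp_iff.mpr ⟨v, (mem_graph_pdiag_iff.mp hv).1, hvy'⟩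
    exact mem_graph_pcomp_iff.mpr ⟨toLp 2 (0, u), mem_graph_pblockLL_iff.mpr ⟨rfl, hxu⟩,
      mem_graph_pdiag_iff.mpr ⟨M'.graph.zero_mem, huy'⟩⟩

theorem dense_pdiag_domain {N M : E →ₗ.[ℂ] E} (hN : Dense (N.domain : Set E))
    (hM : Dense (M.domain : Set E)) : Dense ((pdiag N M).domain : Set (WithLp 2 (E × E))) :=
  (hN.prod hM).preimage (WithLp.prodContinuousLinearEquiv 2 ℂ E E).toHomeomorph.isOpenMap

theorem pdiag_adjoint [CompleteSpace E] {N M : E →ₗ.[ℂ] E} (hN : Dense (N.domain : Set E))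
    (hM : Dense (M.domain : Set E)) : (pdiag N M)† = pdiag N† M† := by
  refine eq_of_eq_graph <| Submodule.ext ?_
  rintro ⟨⟨x, y⟩, ⟨x', y'⟩⟩
  rw [adjoint_graph_eq_graph_adjoint (dense_pdiag_domain hN hM), mem_graph_pdiag_iff,
    adjoint_graph_eq_graph_adjoint hN, adjoint_graph_eq_graph_adjoint hM]
  simp only [Submodule.mem_adjoint_iff]
  constructor
  · intro h
    refine ⟨fun a b hab => ?_, fun a b hab => ?_⟩
    · simpa [prod_inner_apply] using
        h (toLp 2 (a, 0)) (toLp 2 (b, 0)) (mem_graph_pdiag_iff.mpr ⟨hab, M.graph.zero_mem⟩)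
    · simpa [prod_inner_apply] using
        h (toLp 2 (0, a)) (toLp 2 (0, b)) (mem_graph_pdiag_iff.mpr ⟨N.graph.zero_mem, hab⟩)
  · rintro ⟨hx, hy⟩ ⟨a, a'⟩ ⟨b, b'⟩ hab
    obtain ⟨hNab, hMab⟩ := mem_graph_pdiag_iff.mp hab
    rw [prod_inner_apply, prod_inner_apply]
    linear_combination hx a b hNab + hy a' b' hMab

end BlockOperators

theorem pblock_pdiag_comm_iff_general (T N : H →ₗ.[ℂ] H) (hN : N.IsNormalOp) :
    T.pcomp N ≤ N.pcomp T ↔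
      (pblockLL T).pcomp (pdiag N N.adjoint) ≤ (pdiag N N.adjoint).adjoint.pcomp (pblockLL T) := by
  obtain ⟨hNd, hNc, -⟩ := hN
  rw [pdiag_adjoint hNd (dense_adjoint_domain_of_isClosed hNd hNc),
    adjoint_adjoint_of_isClosed hNd hNc]
  exact pblockLL_pcomp_pdiag_le_iff.symm

/-- Let `T` be a closed operator and `N` a normal operator, `A` the block operator
`(x, y) ↦ (0, T x)` on `dom T ⊕ H` and `Ñ = diag(N, N*)` on `dom N ⊕ dom N*`.
Then `T N ⊆ N T` if and only if `A Ñ ⊆ Ñ* A`. -/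
theorem pblock_pdiag_comm_iff (T N : H →ₗ.[ℂ] H)
    (hTc : T.IsClosed) (hTd : Dense (T.domain : Set H)) (hN : N.IsNormalOp) :
    T.pcomp N ≤ N.pcomp T ↔
      (pblockLL T).pcomp (pdiag N N.adjoint) ≤ (pdiag N N.adjoint).adjoint.pcomp (pblockLL T) :=
  pblock_pdiag_comm_iff_general T N hN
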